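/- arXiv:1505.02893 — 3 statements merged into one kernel-verified Lean document; each statement's English description precedes it below -/
import Mathlib

section
/- Let G be the group (ℚ,+) written multiplicatively, m ≥ 2 an integer, and let φ be the automorphism of the group algebra A = FG induced by g ↦ g^m (i.e. by q ↦ mq on ℚ). Equip A with the F[ℤ]-action where the generator acts by φ. Then the commutative algebra A satisfies c_n^{Fℤ}(A) = +∞ for every n ≥ 1; more precisely, for every n the quotient P_n^{Fℤ}/(P_n^{Fℤ} ∩ Id^{Fℤ}(A)) is infinite-dimensional. -/
/-! The monomials `x₀^{φ^k} x₁ ⋯ xₙ` (`k ∈ ℕ`) are multilinear, and the substitution `x₀ = e₁`,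
`xᵢ = 1` (`i > 0`) sends the `k`-th one to `e_{m^k}`. Since `m ≥ 2` these are pairwise distinct
basis elements of `FG`, so no nontrivial linear combination of the monomials is an identity:
their classes modulo `Id^{Fℤ}(A)` are linearly independent. -/

noncomputable section

open scoped TensorProduct

/-- A generalized `H`-action on an algebra `A`. -/
def IsGenAction {F : Type*} [Field F] {A : Type*} [NonUnitalRing A] [Module F A]
    {H : Type*} [Ring H] [Algebra F H] (ρ : H →ₐ[F] Module.End F A) : Prop :=
  ∀ h : H, ∃ (k : ℕ) (h₁ h₂ h₃ h₄ : Fin k → H), ∀ a b : A,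
    ρ h (a * b) = ∑ i : Fin k, (ρ (h₁ i) a * ρ (h₂ i) b + ρ (h₃ i) b * ρ (h₄ i) a)

variable (F : Type*) [Field F]
  (A : Type*) [NonUnitalRing A] [Module F A] [SMulCommClass F A A] [IsScalarTower F A A]
  (H : Type*) [Ring H] [Algebra F H]

/-- We model the free `H`-polynomial algebra `F⟨X|H⟩ = ⊕_{n≥1} H^{⊗n} ⊗ F⟨X⟩^{(n)}`
(together with an adjoined unit) as the tensor algebra of `⊕_{i∈ℕ} H = ℕ →₀ H`, with
`x_i^h` corresponding to `ι (single i h)`. -/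
abbrev FreeHPolyAlg := TensorAlgebra F (ℕ →₀ H)

/-- The non-unital subalgebra of genuine (positive-degree) `H`-polynomials. -/
def FreeHPoly : NonUnitalSubalgebra F (FreeHPolyAlg F H) :=
  NonUnitalAlgebra.adjoin F (Set.range (TensorAlgebra.ι F (M := ℕ →₀ H)))

/-- The evaluation (substitution) homomorphism `ψ̄ : F⟨X|H⟩ → A⁺` attached to a map
`ψ : X → A`; it satisfies `ψ̄(x_i^h) = h·ψ(x_i)` (values taken in the unitalization `A⁺`
since `A` need not be unital). -/
def evalH (ρ : H →ₐ[F] Module.End F A) (ψ : ℕ → A) :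
    FreeHPolyAlg F H →ₐ[F] Unitization F A :=
  TensorAlgebra.lift F ((Unitization.inrHom F F A).comp
    (Finsupp.lsum F fun i => (LinearMap.applyₗ (ψ i)).comp ρ.toLinearMap))

/-- The space of polynomial `H`-identities of `A`. -/
def IdHSub (ρ : H →ₐ[F] Module.End F A) : Submodule F (FreeHPolyAlg F H) :=
  ⨅ ψ : ℕ → A, LinearMap.ker (evalH F A H ρ ψ).toLinearMap

/-- The space `P_n^H` of multilinear `H`-polynomials in `x_1, …, x_n`, spanned by the
monomials `x^{h₁}_{σ(1)} ⋯ x^{hₙ}_{σ(n)}`. -/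
def PnH (n : ℕ) : Submodule F (FreeHPolyAlg F H) :=
  Submodule.span F {f | ∃ (σ : Equiv.Perm (Fin n)) (h : Fin n → H),
    f = (List.ofFn fun j => TensorAlgebra.ι F
          (Finsupp.single ((σ j : Fin n) : ℕ) (h j))).prod}

/-- The `n`-th codimension of polynomial `H`-identities of `A`,
`c_n^H(A) = dim P_n^H/(P_n^H ∩ Id^H(A))`, as a cardinal. -/
def cnH (ρ : H →ₐ[F] Module.End F A) (n : ℕ) : Cardinal :=
  Module.rank F (↥(PnH F H n) ⧸ Submodule.comap (PnH F H n).subtype (IdHSub F A H ρ))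

end
open TensorAlgebra

section Monomials

variable {F : Type*} [Field F] {H : Type*} [Ring H] [Algebra F H]

noncomputable def monomialH {n : ℕ} (i : Fin n → ℕ) (h : Fin n → H) : FreeHPolyAlg F H :=
  (List.ofFn fun j => ι F (Finsupp.single (i j) (h j))).prod

theorem monomialH_mem_PnH {n : ℕ} (h : Fin n → H) :
    monomialH (F := F) (fun j => (j : ℕ)) h ∈ PnH F H n :=
  Submodule.subset_span ⟨Equiv.refl _, h, rfl⟩

end Monomials

section NonUnital

variable {F : Type*} [Field F] {H : Type*} [Ring H] [Algebra F H]
  {A : Type*} [NonUnitalRing A] [Module F A] [SMulCommClass F A A] [IsScalarTower F A A]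

theorem evalH_ι_single (ρ : H →ₐ[F] Module.End F A) (ψ : ℕ → A) (i : ℕ) (h : H) :
    evalH F A H ρ ψ (ι F (Finsupp.single i h)) = (ρ h (ψ i) : Unitization F A) := by
  simp [evalH]

theorem evalH_eq_zero_of_mem_IdHSub {ρ : H →ₐ[F] Module.End F A} {f : FreeHPolyAlg F H}
    (hf : f ∈ IdHSub F A H ρ) (ψ : ℕ → A) : evalH F A H ρ ψ f = 0 :=
  (Submodule.mem_iInf _).mp hf ψ

theorem linearIndependent_mk_of_evalH {ι M : Type*} [AddCommGroup M] [Module F M]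
    {ρ : H →ₐ[F] Module.End F A} {P : Submodule F (FreeHPolyAlg F H)} (ψ : ℕ → A)
    (L : Unitization F A →ₗ[F] M) {v : ι → P}
    (hv : LinearIndependent F fun i => L (evalH F A H ρ ψ (v i))) :
    LinearIndependent F fun i =>
      Submodule.Quotient.mk (p := Submodule.comap P.subtype (IdHSub F A H ρ)) (v i) := by
  let ev : P →ₗ[F] M := L ∘ₗ (evalH F A H ρ ψ).toLinearMap ∘ₗ P.subtype
  have hker : Submodule.comap P.subtype (IdHSub F A H ρ) ≤ LinearMap.ker ev := fun f hf => by
    rw [LinearMap.mem_ker, ← map_zero L, ← evalH_eq_zero_of_mem_IdHSub hf ψ]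
    rfl
  exact hv.of_comp (Submodule.liftQ _ ev hker)

end NonUnital

section Unital

variable {F : Type*} [Field F] {H : Type*} [Ring H] [Algebra F H] {A : Type*} [Ring A] [Algebra F A]

/- For unital `A` we read values in `A` itself through `A⁺ → A`: inside `A⁺` the element `1 : A`
is an idempotent different from the unit. -/
theorem lift_id_evalH_monomialH (ρ : H →ₐ[F] Module.End F A) (ψ : ℕ → A) {n : ℕ}
    (i : Fin n → ℕ) (h : Fin n → H) :
    Unitization.lift (NonUnitalAlgHom.id F A) (evalH F A H ρ ψ (monomialH i h)) =
      (List.ofFn fun j => ρ (h j) (ψ (i j))).prod := by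
  simp [monomialH, map_list_prod, List.map_ofFn, Function.comp_def, evalH_ι_single]

end Unital

section GroupAlgebra

open AddMonoidAlgebra

variable {F : Type*} [Field F]

theorem linearIndependent_single_pow (m : ℕ) (hm : 2 ≤ m) :
    LinearIndependent F fun k : ℕ => single ((m : ℚ) ^ k) (1 : F) := by
  have hinj : Function.Injective fun k : ℕ => (m : ℚ) ^ k :=
    pow_right_injective₀ (by positivity) (by norm_cast; omega)
  simpa [Function.comp_def] using (AddMonoidAlgebra.basis ℚ F).linearIndependent.comp _ hinj

theorem lift_id_evalH_monomialH_cons_single (m : ℕ)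
    (ρ : F[ℤ] →ₐ[F] Module.End F F[ℚ])
    (hρ : ∀ (k : ℤ) (q : ℚ) (c : F), ρ (single k 1) (single q c) = single ((m : ℚ) ^ k * q) c)
    (n k : ℕ) :
    Unitization.lift (NonUnitalAlgHom.id F _)
        (evalH F _ _ ρ (fun i => if i = 0 then single 1 1 else 1)
          (monomialH (n := n + 1) (fun j => (j : ℕ)) (Fin.cons (single (k : ℤ) 1) 1))) =
      single ((m : ℚ) ^ k) (1 : F) := by
  rw [lift_id_evalH_monomialH, List.ofFn_succ, List.prod_cons]
  simp only [Fin.cons_zero, Fin.cons_succ, Fin.val_zero, Fin.val_succ, if_pos, hρ, Pi.one_apply,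
    map_one, Module.End.one_apply, zpow_natCast, mul_one, Nat.add_one_ne_zero, if_false,
    List.ofFn_const, List.prod_replicate, one_pow]

end GroupAlgebra

noncomputable section

/-- Let `G = (ℚ,+)` written multiplicatively, `m ≥ 2`, `A = FG` its group algebra, with
the `F[ℤ]`-action in which the generator acts by the automorphism `φ` induced by
`g ↦ g^m` (i.e. `q ↦ mq` on `ℚ`), so that `ρ(single k 1)` maps `e_q` to `e_{m^k q}`.
Then the commutative algebra `A` satisfies `c_n^{Fℤ}(A) = +∞` for every `n ≥ 1`: the
quotient `P_n^{Fℤ}/(P_n^{Fℤ} ∩ Id^{Fℤ}(A))` is infinite-dimensional. -/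
theorem codim_infinite_group_algebra (F : Type*) [Field F] (m : ℕ) (hm : 2 ≤ m)
    (ρ : AddMonoidAlgebra F ℤ →ₐ[F] Module.End F (AddMonoidAlgebra F ℚ))
    (hρ : ∀ (k : ℤ) (q : ℚ) (c : F),
      ρ (AddMonoidAlgebra.single k 1) (AddMonoidAlgebra.single q c) =
        AddMonoidAlgebra.single ((m : ℚ) ^ k * q) c) :
    ∀ n : ℕ, 1 ≤ n →
      ¬ Module.Finite F
        (↥(PnH F (AddMonoidAlgebra F ℤ) n) ⧸
          Submodule.comap (PnH F (AddMonoidAlgebra F ℤ) n).subtype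
            (IdHSub F (AddMonoidAlgebra F ℚ) (AddMonoidAlgebra F ℤ) ρ)) := by
  intro n hn
  obtain ⟨n, rfl⟩ := Nat.exists_eq_add_of_le' hn
  let ψ : ℕ → AddMonoidAlgebra F ℚ := fun i => if i = 0 then AddMonoidAlgebra.single 1 1 else 1
  let v : ℕ → PnH F (AddMonoidAlgebra F ℤ) (n + 1) := fun k =>
    ⟨_, monomialH_mem_PnH (Fin.cons (AddMonoidAlgebra.single (k : ℤ) 1) 1)⟩
  have hv : LinearIndependent F fun k =>
      Unitization.lift (NonUnitalAlgHom.id F _) (evalH F _ _ ρ ψ (v k)) := by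
    convert linearIndependent_single_pow (F := F) m hm using 1
    exact funext (lift_id_evalH_monomialH_cons_single m ρ hρ n)
  intro hfin
  exact Module.Finite.not_linearIndependent_of_infinite _
    (linearIndependent_mk_of_evalH ψ
      (Unitization.lift (NonUnitalAlgHom.id F (AddMonoidAlgebra F ℚ))).toLinearMap hv)
end
end

section
/- The Taft algebra H_{m²}(ζ) admits a Hopf algebra structure determined by Δ(c) = c⊗c, Δ(v) = c⊗v + v⊗1, ε(c) = 1, ε(v) = 0, with antipode S given by S(c) = c^{−1}, S(v) = −c^{−1}v. In particular Δ and ε are well-defined algebra homomorphisms on H_{m²}(ζ) and S satisfies the antipode axioms. -/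
open scoped TensorProduct

/-- The defining relations of the Taft algebra: `c^m = 1`, `v^m = 0`, `vc = ζ·cv`. -/
inductive TaftRel (F : Type*) [Field F] (ζ : F) (m : ℕ) :
    FreeAlgebra F (Fin 2) → FreeAlgebra F (Fin 2) → Prop
  | cpow : TaftRel F ζ m ((FreeAlgebra.ι F (0 : Fin 2)) ^ m) 1
  | vpow : TaftRel F ζ m ((FreeAlgebra.ι F (1 : Fin 2)) ^ m) 0
  | vc : TaftRel F ζ m (FreeAlgebra.ι F (1 : Fin 2) * FreeAlgebra.ι F (0 : Fin 2))
      (ζ • (FreeAlgebra.ι F (0 : Fin 2) * FreeAlgebra.ι F (1 : Fin 2)))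

/-- The Taft algebra `H_{m²}(ζ)`. -/
abbrev TaftAlgebra (F : Type*) [Field F] (ζ : F) (m : ℕ) := RingQuot (TaftRel F ζ m)

/-- The image of the generator `c` in the Taft algebra. -/
noncomputable def TaftAlgebra.c (F : Type*) [Field F] (ζ : F) (m : ℕ) : TaftAlgebra F ζ m :=
  RingQuot.mkAlgHom F (TaftRel F ζ m) (FreeAlgebra.ι F (0 : Fin 2))

/-- The image of the generator `v` in the Taft algebra. -/
noncomputable def TaftAlgebra.v (F : Type*) [Field F] (ζ : F) (m : ℕ) : TaftAlgebra F ζ m :=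
  RingQuot.mkAlgHom F (TaftRel F ζ m) (FreeAlgebra.ι F (1 : Fin 2))

/-!
`Δ`, `ε` and `S` are defined on the generators through the universal property of the quotient,
so the work lies in checking the relations. The only delicate one is `Δ(v)^m = 0`: the summands
`c ⊗ v` and `v ⊗ 1` of `Δ(v)` `ζ`-commute, so by the `q`-binomial theorem the mixed terms of
`Δ(v)^m` carry the Gaussian binomials `[m, k]_ζ`, which vanish for `0 < k < m` because
`[m]_ζ! = 0` while `[k]_ζ! [m - k]_ζ! ≠ 0`. The bialgebra identities compare algebra maps, hence
reduce to the generators; so do the antipode identities, because `S` reverses products and the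
set where an antipode identity holds is therefore closed under multiplication.
-/

open Finset

section QBinomial

variable {R : Type*} [CommSemiring R]

-- The `q`-Pascal rule in the form produced by left multiplication with `a + b` when
-- `b * a = q • (a * b)` (see `QCommute.add_pow`).
def qBinomial (q : R) : ℕ → ℕ → R
  | _, 0 => 1
  | 0, _ + 1 => 0
  | n + 1, k + 1 => qBinomial q n k + q ^ (k + 1) * qBinomial q n (k + 1)

def qFactorial (q : R) (n : ℕ) : R := ∏ i ∈ range n, ∑ j ∈ range (i + 1), q ^ j

@[simp]
theorem qBinomial_zero_right (q : R) (n : ℕ) : qBinomial q n 0 = 1 := by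
  cases n <;> rfl

theorem qBinomial_succ_succ (q : R) (n k : ℕ) :
    qBinomial q (n + 1) (k + 1) = qBinomial q n k + q ^ (k + 1) * qBinomial q n (k + 1) :=
  rfl

theorem qBinomial_eq_zero_of_lt (q : R) : ∀ {n k : ℕ}, n < k → qBinomial q n k = 0
  | 0, _ + 1, _ => rfl
  | n + 1, k + 1, h => by
    rw [qBinomial_succ_succ, qBinomial_eq_zero_of_lt q (by omega),
      qBinomial_eq_zero_of_lt q (by omega), mul_zero, add_zero]

theorem qBinomial_self (q : R) : ∀ n, qBinomial q n n = 1
  | 0 => rfl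
  | n + 1 => by
    rw [qBinomial_succ_succ, qBinomial_self q n, qBinomial_eq_zero_of_lt q n.lt_succ_self,
      mul_zero, add_zero]

theorem qFactorial_succ (q : R) (n : ℕ) :
    qFactorial q (n + 1) = qFactorial q n * ∑ j ∈ range (n + 1), q ^ j :=
  prod_range_succ _ _

theorem qBinomial_mul_qFactorial_mul_qFactorial (q : R) {n k : ℕ} (hk : k ≤ n) :
    qBinomial q n k * qFactorial q k * qFactorial q (n - k) = qFactorial q n := by
  induction n generalizing k with
  | zero =>
    obtain rfl : k = 0 := by omega
    simp [qFactorial]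
  | succ n ih =>
    obtain _ | j := k
    · simp [qFactorial]
    have hleft : qBinomial q n j * qFactorial q (j + 1) * qFactorial q (n - j) =
        qFactorial q n * ∑ i ∈ range (j + 1), q ^ i := by
      rw [qFactorial_succ, ← ih (k := j) (by omega)]
      ring
    have hright : qBinomial q n (j + 1) * qFactorial q (j + 1) * qFactorial q (n - j) =
        qFactorial q n * ∑ i ∈ range (n - j), q ^ i := by
      obtain rfl | hj : j = n ∨ j + 1 ≤ n := by omega
      · simp [qBinomial_eq_zero_of_lt]
      · obtain ⟨l, hl⟩ : ∃ l, n - j = l + 1 := ⟨n - j - 1, by omega⟩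
        rw [hl, qFactorial_succ q l, ← ih hj, show n - (j + 1) = l by omega]
        ring
    have hsplit : ∑ i ∈ range (n + 1), q ^ i =
        ∑ i ∈ range (j + 1), q ^ i + q ^ (j + 1) * ∑ i ∈ range (n - j), q ^ i := by
      rw [show n + 1 = j + 1 + (n - j) by omega, sum_range_add, mul_sum]
      simp only [pow_add]
    rw [qBinomial_succ_succ, Nat.add_sub_add_right, qFactorial_succ q n, hsplit, add_mul, add_mul,
      hleft, mul_assoc, mul_assoc, ← mul_assoc _ (qFactorial q _), hright]
    ring

end QBinomial

theorem IsPrimitiveRoot.qBinomial_eq_zero {R : Type*} [CommRing R] [IsDomain R] {q : R}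
    {m k : ℕ} (hq : IsPrimitiveRoot q m) (hk : 0 < k) (hkm : k < m) : qBinomial q m k = 0 := by
  have hfac_ne : ∀ {j}, j < m → qFactorial q j ≠ 0 := fun hj => by
    refine prod_ne_zero_iff.mpr fun i hi h => ?_
    have := geom_sum_mul q (i + 1)
    rw [h, zero_mul, eq_comm, sub_eq_zero] at this
    exact hq.pow_ne_one_of_pos_of_lt i.succ_ne_zero (by simp at hi; omega) this
  have hfac_m : qFactorial q m = 0 :=
    prod_eq_zero (i := m - 1) (by simp; omega)
      (by rw [Nat.sub_add_cancel (by omega)]; exact hq.geom_sum_eq_zero (by omega))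
  have := qBinomial_mul_qFactorial_mul_qFactorial q hkm.le
  rw [hfac_m] at this
  simpa [hfac_ne hkm, hfac_ne (show m - k < m by omega)] using this

section QCommute

variable {R A : Type*} [CommSemiring R] [Semiring A] [Algebra R A]

def QCommute (q : R) (a b : A) : Prop := b * a = q • (a * b)

variable {q : R} {a b : A}

theorem QCommute.pow_left (h : QCommute q a b) (k : ℕ) : QCommute (q ^ k) (a ^ k) b := by
  induction k with
  | zero => simp [QCommute]
  | succ k ih =>
    rw [QCommute, pow_succ, ← mul_assoc, ih, smul_mul_assoc, mul_assoc, h, mul_smul_comm,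
      smul_smul, pow_succ, ← mul_assoc]

theorem QCommute.mul_pow (h : QCommute q a b) (n : ℕ) :
    (a * b) ^ n = q ^ n.choose 2 • (a ^ n * b ^ n) := by
  induction n with
  | zero => simp
  | succ n ih =>
    rw [pow_succ', ih, mul_smul_comm, mul_assoc, ← mul_assoc b, h.pow_left n, smul_mul_assoc,
      mul_smul_comm, smul_smul, Nat.choose_succ_succ', Nat.choose_one_right, pow_add,
      mul_comm (q ^ n)]
    simp only [pow_succ', mul_assoc]

theorem QCommute.add_pow (h : QCommute q a b) (n : ℕ) :
    (a + b) ^ n = ∑ k ∈ range (n + 1), qBinomial q n k • (a ^ k * b ^ (n - k)) := by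
  induction n with
  | zero => simp
  | succ n ih =>
    have hb : ∀ k ∈ range (n + 1),
        b * (a ^ k * b ^ (n - k)) = q ^ k • (a ^ k * b ^ (n + 1 - k)) := fun k hk => by
      rw [← mul_assoc, h.pow_left k, smul_mul_assoc, mul_assoc, ← pow_succ',
        Nat.sub_add_comm (by simpa [Nat.lt_succ_iff] using hk)]
    have hexpand : (a + b) ^ (n + 1) =
        ∑ k ∈ range (n + 1), qBinomial q n k • (a ^ (k + 1) * b ^ (n - k)) +
          ∑ k ∈ range (n + 1), (q ^ k * qBinomial q n k) • (a ^ k * b ^ (n + 1 - k)) := by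
      rw [pow_succ', ih, add_mul, mul_sum, mul_sum]
      congr 1 <;> refine sum_congr rfl fun k hk => ?_
      · rw [mul_smul_comm, ← mul_assoc, ← pow_succ']
      · rw [mul_smul_comm, hb k hk, smul_smul, mul_comm]
    rw [hexpand, sum_range_succ' (fun k => (q ^ k * qBinomial q n k) • _) n,
      sum_range_succ' _ (n + 1)]
    simp only [qBinomial_succ_succ, add_smul, sum_add_distrib]
    rw [sum_range_succ (fun k => (q ^ (k + 1) * qBinomial q n (k + 1)) • _) n,
      qBinomial_eq_zero_of_lt q n.lt_succ_self]
    simp [add_assoc]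

end QCommute

theorem QCommute.add_pow_of_isPrimitiveRoot {R A : Type*} [CommRing R] [IsDomain R] [Semiring A]
    [Algebra R A] {q : R} {a b : A} {m : ℕ} (h : QCommute q a b) (hq : IsPrimitiveRoot q m)
    (hm : 0 < m) : (a + b) ^ m = a ^ m + b ^ m := by
  rw [h.add_pow, sum_range_succ, sum_eq_single 0]
  · simp [qBinomial_self, add_comm]
  · intro k hk hk0
    rw [hq.qBinomial_eq_zero (Nat.pos_of_ne_zero hk0) (mem_range.mp hk), zero_smul]
  · simp [hm]

section AntipodeOnGenerators

open TensorProduct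

variable {R A : Type*} [CommSemiring R] [Semiring A] [Algebra R A] {S : A →ₗ[R] A}
  (hS : ∀ x y, S (x * y) = S y * S x)
include hS

theorem mul'_map_antipode_id_mul_tmul (t : A ⊗[R] A) (a b : A) :
    LinearMap.mul' R A (map S LinearMap.id (t * a ⊗ₜ b)) =
      S a * LinearMap.mul' R A (map S LinearMap.id t) * b := by
  induction t using TensorProduct.induction_on with
  | zero => simp
  | tmul x y => simp [hS, mul_assoc]
  | add t u ht hu => simp only [add_mul, map_add, ht, hu, mul_add]

theorem mul'_map_id_antipode_tmul_mul (a b : A) (t : A ⊗[R] A) :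
    LinearMap.mul' R A (map LinearMap.id S (a ⊗ₜ b * t)) =
      a * LinearMap.mul' R A (map LinearMap.id S t) * S b := by
  induction t using TensorProduct.induction_on with
  | zero => simp
  | tmul x y => simp [hS, mul_assoc]
  | add t u ht hu => simp only [mul_add, map_add, ht, hu, add_mul]

theorem mul'_map_antipode_id_mul_of_eq_smul_one {t : A ⊗[R] A} {r : R}
    (ht : LinearMap.mul' R A (map S LinearMap.id t) = r • 1)
    (u : A ⊗[R] A) :
    LinearMap.mul' R A (map S LinearMap.id (t * u)) =
      r • LinearMap.mul' R A (map S LinearMap.id u) := by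
  induction u using TensorProduct.induction_on with
  | zero => simp
  | tmul a b => simp [mul'_map_antipode_id_mul_tmul hS, ht]
  | add u w hu hw => simp only [mul_add, map_add, hu, hw, smul_add]

theorem mul'_map_id_antipode_mul_of_eq_smul_one {u : A ⊗[R] A} {r : R}
    (hu : LinearMap.mul' R A (map LinearMap.id S u) = r • 1)
    (t : A ⊗[R] A) :
    LinearMap.mul' R A (map LinearMap.id S (t * u)) =
      r • LinearMap.mul' R A (map LinearMap.id S t) := by
  induction t using TensorProduct.induction_on with
  | zero => simp
  | tmul a b => simp [mul'_map_id_antipode_tmul_mul hS, hu]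
  | add t w ht hw => simp only [add_mul, map_add, ht, hw, smul_add]

variable {Δ : A →ₐ[R] A ⊗[R] A} {ε : A →ₐ[R] R} {s : Set A}

theorem mul'_map_antipode_id_comul_of_adjoin_eq_top (hS1 : S 1 = 1)
    (hs : Algebra.adjoin R s = ⊤)
    (h : ∀ x ∈ s, LinearMap.mul' R A (map S LinearMap.id (Δ x)) = ε x • 1) (x : A) :
    LinearMap.mul' R A (map S LinearMap.id (Δ x)) = ε x • 1 := by
  induction (hs ▸ Algebra.mem_top : x ∈ Algebra.adjoin R s) using Algebra.adjoin_induction with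
  | mem x hx => exact h x hx
  | algebraMap r => simp [Algebra.algebraMap_eq_smul_one, Algebra.TensorProduct.one_def, hS1]
  | add x y _ _ hx hy => simp only [map_add, hx, hy, add_smul]
  | mul x y _ _ hx hy =>
    rw [map_mul, mul'_map_antipode_id_mul_of_eq_smul_one hS hx, hy, map_mul, mul_smul]

theorem mul'_map_id_antipode_comul_of_adjoin_eq_top (hS1 : S 1 = 1)
    (hs : Algebra.adjoin R s = ⊤)
    (h : ∀ x ∈ s, LinearMap.mul' R A (map LinearMap.id S (Δ x)) = ε x • 1) (x : A) :
    LinearMap.mul' R A (map LinearMap.id S (Δ x)) = ε x • 1 := by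
  induction (hs ▸ Algebra.mem_top : x ∈ Algebra.adjoin R s) using Algebra.adjoin_induction with
  | mem x hx => exact h x hx
  | algebraMap r => simp [Algebra.algebraMap_eq_smul_one, Algebra.TensorProduct.one_def, hS1]
  | add x y _ _ hx hy => simp only [map_add, hx, hy, add_smul]
  | mul x y _ _ hx hy =>
    rw [map_mul, mul'_map_id_antipode_mul_of_eq_smul_one hS hy, hx, map_mul, mul_comm, mul_smul]

end AntipodeOnGenerators

namespace TaftAlgebra

variable {F : Type*} [Field F] {ζ : F} {m : ℕ}

local notation "𝐜" => TaftAlgebra.c F ζ m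
local notation "𝐯" => TaftAlgebra.v F ζ m

theorem c_pow : 𝐜 ^ m = 1 := by
  simpa [c, map_pow] using RingQuot.mkAlgHom_rel F (TaftRel.cpow (F := F) (ζ := ζ) (m := m))

theorem v_pow : 𝐯 ^ m = 0 := by
  simpa [v, map_pow] using RingQuot.mkAlgHom_rel F (TaftRel.vpow (F := F) (ζ := ζ) (m := m))

theorem qCommute_c_v : QCommute ζ 𝐜 𝐯 := by
  simpa [QCommute, c, v, map_mul, map_smul] using
    RingQuot.mkAlgHom_rel F (TaftRel.vc (F := F) (ζ := ζ) (m := m))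

theorem c_mul_c_pow_pred (hm : 0 < m) : 𝐜 * 𝐜 ^ (m - 1) = 1 := by
  rw [← pow_succ', Nat.sub_add_cancel hm, c_pow]

theorem c_pow_pred_mul_c (hm : 0 < m) : 𝐜 ^ (m - 1) * 𝐜 = 1 := by
  rw [← pow_succ, Nat.sub_add_cancel hm, c_pow]

theorem algHom_ext {B : Type*} [Semiring B] [Algebra F B] {f g : TaftAlgebra F ζ m →ₐ[F] B}
    (hc : f 𝐜 = g 𝐜) (hv : f 𝐯 = g 𝐯) : f = g := by
  refine RingQuot.ringQuot_ext' _ _ _ <| FreeAlgebra.hom_ext <| funext fun i => ?_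
  fin_cases i
  exacts [hc, hv]

theorem adjoin_c_v : Algebra.adjoin F {𝐜, 𝐯} = ⊤ := by
  rw [eq_top_iff]
  rintro x -
  obtain ⟨y, rfl⟩ := RingQuot.mkAlgHom_surjective F (TaftRel F ζ m) x
  induction y using FreeAlgebra.induction with
  | grade0 r => simpa only [AlgHom.commutes] using Subalgebra.algebraMap_mem _ r
  | grade1 i =>
    fin_cases i
    exacts [Algebra.subset_adjoin (Set.mem_insert _ _),
      Algebra.subset_adjoin (Set.mem_insert_of_mem _ rfl)]
  | mul a b ha hb => simpa only [map_mul] using mul_mem ha hb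
  | add a b ha hb => simpa only [map_add] using add_mem ha hb

section Lift

variable {B : Type*} [Semiring B] [Algebra F B] (a b : B)

noncomputable def lift (ha : a ^ m = 1) (hb : b ^ m = 0) (hab : QCommute ζ a b) :
    TaftAlgebra F ζ m →ₐ[F] B :=
  RingQuot.liftAlgHom F ⟨FreeAlgebra.lift F ![a, b], fun _ _ r => by
    cases r with
    | cpow => simpa using ha
    | vpow => simpa using hb
    | vc => simpa [QCommute] using hab⟩

variable {a b} (ha : a ^ m = 1) (hb : b ^ m = 0) (hab : QCommute ζ a b)

@[simp]
theorem lift_c : lift a b ha hb hab 𝐜 = a := by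
  simp [lift, c]

@[simp]
theorem lift_v : lift a b ha hb hab 𝐯 = b := by
  simp [lift, v]

end Lift

section Hopf

variable (hm : 0 < m) (hζ : IsPrimitiveRoot ζ m)

theorem qCommute_comul_summands :
    QCommute ζ (𝐜 ⊗ₜ[F] 𝐯) (𝐯 ⊗ₜ[F] (1 : TaftAlgebra F ζ m)) := by
  simp only [QCommute, Algebra.TensorProduct.tmul_mul_tmul, one_mul, mul_one]
  rw [qCommute_c_v, TensorProduct.smul_tmul']

theorem qCommute_comul :
    QCommute ζ (𝐜 ⊗ₜ[F] 𝐜) (𝐜 ⊗ₜ[F] 𝐯 + 𝐯 ⊗ₜ[F] (1 : TaftAlgebra F ζ m)) := by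
  simp only [QCommute, add_mul, mul_add, Algebra.TensorProduct.tmul_mul_tmul, one_mul, mul_one]
  rw [qCommute_c_v]
  simp only [smul_add, TensorProduct.tmul_smul, TensorProduct.smul_tmul']

include hm hζ in
theorem comul_v_pow : (𝐜 ⊗ₜ[F] 𝐯 + 𝐯 ⊗ₜ[F] (1 : TaftAlgebra F ζ m)) ^ m = 0 := by
  rw [qCommute_comul_summands.add_pow_of_isPrimitiveRoot hζ hm,
    Algebra.TensorProduct.tmul_pow, Algebra.TensorProduct.tmul_pow, v_pow]
  simp

noncomputable def comul : TaftAlgebra F ζ m →ₐ[F] TaftAlgebra F ζ m ⊗[F] TaftAlgebra F ζ m :=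
  lift (𝐜 ⊗ₜ 𝐜) (𝐜 ⊗ₜ 𝐯 + 𝐯 ⊗ₜ 1) (by rw [Algebra.TensorProduct.tmul_pow, c_pow]; rfl)
    (comul_v_pow hm hζ) qCommute_comul

noncomputable def counit : TaftAlgebra F ζ m →ₐ[F] F :=
  lift 1 0 (one_pow m) (zero_pow hm.ne') (by simp [QCommute])

theorem antipode_v_pow : (-(𝐜 ^ (m - 1) * 𝐯)) ^ m = 0 := by
  rw [neg_pow (𝐜 ^ (m - 1) * 𝐯), (qCommute_c_v.pow_left (m - 1)).mul_pow, v_pow]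
  simp

include hm hζ in
theorem qCommute_antipode : QCommute ζ (MulOpposite.op (𝐜 ^ (m - 1)))
    (MulOpposite.op (-(𝐜 ^ (m - 1) * 𝐯))) := by
  rw [QCommute, ← MulOpposite.op_mul, ← MulOpposite.op_mul, ← MulOpposite.op_smul,
    neg_mul (𝐜 ^ (m - 1) * 𝐯), mul_assoc, qCommute_c_v.pow_left (m - 1), mul_smul_comm, smul_neg,
    smul_smul, ← pow_succ', Nat.sub_add_cancel hm, hζ.pow_eq_one, one_smul, mul_neg (𝐜 ^ (m - 1))]

noncomputable def antipodeOp : TaftAlgebra F ζ m →ₐ[F] (TaftAlgebra F ζ m)ᵐᵒᵖ :=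
  lift (MulOpposite.op (𝐜 ^ (m - 1))) (MulOpposite.op (-(𝐜 ^ (m - 1) * 𝐯)))
    (by rw [← MulOpposite.op_pow, ← pow_mul, mul_comm, pow_mul, c_pow, one_pow,
      MulOpposite.op_one])
    (by rw [← MulOpposite.op_pow, antipode_v_pow, MulOpposite.op_zero])
    (qCommute_antipode hm hζ)

noncomputable def antipode : TaftAlgebra F ζ m →ₗ[F] TaftAlgebra F ζ m :=
  (MulOpposite.opLinearEquiv F).symm.toLinearMap ∘ₗ (antipodeOp hm hζ).toLinearMap

@[simp] theorem comul_c : comul hm hζ 𝐜 = 𝐜 ⊗ₜ 𝐜 := lift_c ..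
@[simp] theorem comul_v : comul hm hζ 𝐯 = 𝐜 ⊗ₜ 𝐯 + 𝐯 ⊗ₜ 1 := lift_v ..
@[simp] theorem counit_c : counit hm 𝐜 = 1 := lift_c ..
@[simp] theorem counit_v : counit hm 𝐯 = 0 := lift_v ..
@[simp] theorem antipode_c : antipode hm hζ 𝐜 = 𝐜 ^ (m - 1) :=
  congrArg MulOpposite.unop (lift_c ..)
@[simp] theorem antipode_v : antipode hm hζ 𝐯 = -(𝐜 ^ (m - 1) * 𝐯) :=
  congrArg MulOpposite.unop (lift_v ..)

theorem antipode_mul (x y : TaftAlgebra F ζ m) :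
    antipode hm hζ (x * y) = antipode hm hζ y * antipode hm hζ x :=
  congrArg MulOpposite.unop (map_mul (antipodeOp hm hζ) x y)

theorem antipode_one : antipode hm hζ 1 = 1 :=
  congrArg MulOpposite.unop (map_one (antipodeOp hm hζ))

theorem comul_coassoc :
    (Algebra.TensorProduct.assoc F F F _ _ _).toAlgHom.comp
        ((Algebra.TensorProduct.map (comul hm hζ) (AlgHom.id F _)).comp (comul hm hζ)) =
      (Algebra.TensorProduct.map (AlgHom.id F _) (comul hm hζ)).comp (comul hm hζ) := by
  apply algHom_ext
  · simp
  · simp [TensorProduct.add_tmul, TensorProduct.tmul_add, Algebra.TensorProduct.one_def, add_assoc]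

theorem counit_comul_left :
    (Algebra.TensorProduct.lid F _).toAlgHom.comp
        ((Algebra.TensorProduct.map (counit hm) (AlgHom.id F _)).comp (comul hm hζ)) =
      AlgHom.id F (TaftAlgebra F ζ m) := by
  apply algHom_ext <;> simp

theorem counit_comul_right :
    (Algebra.TensorProduct.rid F F _).toAlgHom.comp
        ((Algebra.TensorProduct.map (AlgHom.id F _) (counit hm)).comp (comul hm hζ)) =
      AlgHom.id F (TaftAlgebra F ζ m) := by
  apply algHom_ext <;> simp

theorem mul'_map_antipode_id_comul (x : TaftAlgebra F ζ m) :
    LinearMap.mul' F _ (TensorProduct.map (antipode hm hζ) LinearMap.id (comul hm hζ x)) =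
      counit hm x • 1 := by
  refine mul'_map_antipode_id_comul_of_adjoin_eq_top (antipode_mul hm hζ) (antipode_one hm hζ)
    adjoin_c_v ?_ x
  rintro _ (rfl | rfl)
  · simp [c_pow_pred_mul_c hm]
  · simp [neg_mul (𝐜 ^ (m - 1) * 𝐯)]

theorem mul'_map_id_antipode_comul (x : TaftAlgebra F ζ m) :
    LinearMap.mul' F _ (TensorProduct.map LinearMap.id (antipode hm hζ) (comul hm hζ x)) =
      counit hm x • 1 := by
  refine mul'_map_id_antipode_comul_of_adjoin_eq_top (antipode_mul hm hζ) (antipode_one hm hζ)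
    adjoin_c_v ?_ x
  rintro _ (rfl | rfl)
  · simp [c_mul_c_pow_pred hm]
  · simp only [comul_v, map_add, TensorProduct.map_tmul, LinearMap.mul'_apply, LinearMap.id_apply,
      antipode_v, antipode_one hm hζ, mul_one, counit_v, zero_smul]
    rw [mul_neg 𝐜, ← mul_assoc, c_mul_c_pow_pred hm, one_mul, neg_add_cancel]

end Hopf

end TaftAlgebra

/-- The Taft algebra `H_{m²}(ζ)` admits a Hopf algebra structure determined by
`Δ(c) = c⊗c`, `Δ(v) = c⊗v + v⊗1`, `ε(c) = 1`, `ε(v) = 0`, with antipode `S` given by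
`S(c) = c⁻¹ = c^{m−1}` and `S(v) = −c^{−1}v`.  In particular `Δ` and `ε` are well-defined
algebra homomorphisms on `H_{m²}(ζ)` (so the defining relations are respected), they are
coassociative and counital, and `S` satisfies the antipode axioms. -/
theorem taftAlgebra_hopf (F : Type*) [Field F] (ζ : F) (m : ℕ) (hm : 2 ≤ m)
    (hζ : IsPrimitiveRoot ζ m) :
    ∃ (Δ : TaftAlgebra F ζ m →ₐ[F] TaftAlgebra F ζ m ⊗[F] TaftAlgebra F ζ m)
      (ε : TaftAlgebra F ζ m →ₐ[F] F)
      (S : TaftAlgebra F ζ m →ₗ[F] TaftAlgebra F ζ m),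
      -- values of the comultiplication on the generators
      Δ (TaftAlgebra.c F ζ m) = TaftAlgebra.c F ζ m ⊗ₜ[F] TaftAlgebra.c F ζ m ∧
      Δ (TaftAlgebra.v F ζ m) =
        TaftAlgebra.c F ζ m ⊗ₜ[F] TaftAlgebra.v F ζ m + TaftAlgebra.v F ζ m ⊗ₜ[F] 1 ∧
      -- values of the counit on the generators
      ε (TaftAlgebra.c F ζ m) = 1 ∧
      ε (TaftAlgebra.v F ζ m) = 0 ∧
      -- coassociativity
      (∀ x : TaftAlgebra F ζ m,
        Algebra.TensorProduct.assoc F F F (TaftAlgebra F ζ m) (TaftAlgebra F ζ m)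
            (TaftAlgebra F ζ m)
            (Algebra.TensorProduct.map Δ (AlgHom.id F (TaftAlgebra F ζ m)) (Δ x)) =
          Algebra.TensorProduct.map (AlgHom.id F (TaftAlgebra F ζ m)) Δ (Δ x)) ∧
      -- counit axioms
      (∀ x : TaftAlgebra F ζ m,
        TensorProduct.lid F (TaftAlgebra F ζ m)
          (TensorProduct.map ε.toLinearMap LinearMap.id (Δ x)) = x) ∧
      (∀ x : TaftAlgebra F ζ m,
        TensorProduct.rid F (TaftAlgebra F ζ m)
          (TensorProduct.map LinearMap.id ε.toLinearMap (Δ x)) = x) ∧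
      -- values of the antipode on the generators (`c⁻¹ = c^{m−1}`)
      S (TaftAlgebra.c F ζ m) = TaftAlgebra.c F ζ m ^ (m - 1) ∧
      S (TaftAlgebra.v F ζ m) = -(TaftAlgebra.c F ζ m ^ (m - 1) * TaftAlgebra.v F ζ m) ∧
      -- antipode axioms
      (∀ x : TaftAlgebra F ζ m,
        LinearMap.mul' F (TaftAlgebra F ζ m)
          (TensorProduct.map S LinearMap.id (Δ x)) = ε x • 1) ∧
      (∀ x : TaftAlgebra F ζ m,
        LinearMap.mul' F (TaftAlgebra F ζ m)
          (TensorProduct.map LinearMap.id S (Δ x)) = ε x • 1) := by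
  have hm0 : 0 < m := by omega
  open TaftAlgebra in
  exact ⟨comul hm0 hζ, counit hm0, antipode hm0 hζ,
    comul_c .., comul_v .., counit_c .., counit_v ..,
    fun x => congrArg (· x) (comul_coassoc hm0 hζ),
    fun x => congrArg (· x) (counit_comul_left hm0 hζ),
    fun x => congrArg (· x) (counit_comul_right hm0 hζ), antipode_c .., antipode_v ..,
    mul'_map_antipode_id_comul hm0 hζ, mul'_map_id_antipode_comul hm0 hζ⟩
end

section
/- Let A be a finite-dimensional T-graded algebra over a field F, where T is a semigroup. Then for all n ∈ ℕ, the n-th codimension of graded polynomial identities equals the n-th codimension of (FT)*-identities: c_n^{T-gr}(A) = c_n^{(FT)*}(A). -/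
noncomputable section

/-- We model the free `T`-graded polynomial algebra (with adjoined unit) as the tensor
algebra on the graded variables `x_i^t`, `i ∈ ℕ`, `t ∈ T`. -/
abbrev FreeGrAlg (F : Type*) [Field F] (T : Type*) := TensorAlgebra F (ℕ × T →₀ F)

/-- The evaluation homomorphism attached to a graded substitution `ψ`, sending the graded
variable `x_i^t` to `ψ (i, t)` (values in the unitalization `A⁺`). -/
def evalGr (F : Type*) [Field F] (T : Type*)
    (A : Type*) [NonUnitalRing A] [Module F A] [SMulCommClass F A A] [IsScalarTower F A A]
    (ψ : ℕ × T → A) : FreeGrAlg F T →ₐ[F] Unitization F A :=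
  TensorAlgebra.lift F ((Unitization.inrHom F F A).comp
    (Finsupp.lsum F fun p => LinearMap.toSpanSingleton F A (ψ p)))

/-- The space of graded polynomial identities of a `T`-graded algebra `A = ⊕_t A^{(t)}`:
those elements killed by every graded substitution (each `x_i^t` is evaluated in the
homogeneous component `A^{(t)}`). -/
def IdGr (F : Type*) [Field F] (T : Type*)
    (A : Type*) [NonUnitalRing A] [Module F A] [SMulCommClass F A A] [IsScalarTower F A A]
    (𝒜 : T → Submodule F A) : Submodule F (FreeGrAlg F T) :=
  ⨅ ψ : {ψ : ℕ × T → A // ∀ (i : ℕ) (t : T), ψ (i, t) ∈ 𝒜 t},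
    LinearMap.ker (evalGr F T A ψ.1).toLinearMap

/-- The space of multilinear graded polynomials in `x_1, …, x_n`, spanned by the
monomials `x^{t₁}_{σ(1)} ⋯ x^{tₙ}_{σ(n)}`. -/
def PnGr (F : Type*) [Field F] (T : Type*) (n : ℕ) : Submodule F (FreeGrAlg F T) :=
  Submodule.span F {f | ∃ (σ : Equiv.Perm (Fin n)) (t : Fin n → T),
    f = (List.ofFn fun j => TensorAlgebra.ι F
          (Finsupp.single (((σ j : Fin n) : ℕ), t j) (1 : F))).prod}

namespace Submodule

variable {R M N : Type*} [Ring R] [AddCommGroup M] [Module R M] [AddCommGroup N] [Module R N]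

def quotientComapSubtypeEquiv (Φ : M →ₗ[R] N) {P I : Submodule R M}
    {Q J : Submodule R N} (hPQ : ∀ x ∈ P, Φ x ∈ Q) (hI : ∀ x ∈ P, Φ x ∈ J ↔ x ∈ I)
    (hQ : ∀ y ∈ Q, ∃ x ∈ P, y - Φ x ∈ J) :
    (P ⧸ I.comap P.subtype) ≃ₗ[R] (Q ⧸ J.comap Q.subtype) :=
  let g := (J.comap Q.subtype).mkQ ∘ₗ Φ.restrict hPQ
  have hg : Function.Surjective g := by
    rintro ⟨y⟩
    obtain ⟨x, hx, hxy⟩ := hQ y.1 y.2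
    refine ⟨⟨x, hx⟩, (Submodule.Quotient.eq _).2 ?_⟩
    simpa [← neg_mem_iff (x := y.1 - Φ x)] using hxy
  have hker : I.comap P.subtype = LinearMap.ker g := by
    ext ⟨x, hx⟩
    simp [g, hI x hx]
  (Submodule.quotEquivOfEq _ _ hker).trans (g.quotKerEquivOfSurjective hg)

end Submodule

theorem LinearMap.ext_of_iSup_eq_top {R M N ι : Type*} [Semiring R] [AddCommMonoid M]
    [Module R M] [AddCommMonoid N] [Module R N] {p : ι → Submodule R M} (hp : iSup p = ⊤)
    {f g : M →ₗ[R] N} (h : ∀ i, ∀ x ∈ p i, f x = g x) : f = g := by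
  ext x
  exact Submodule.iSup_induction p (motive := fun x => f x = g x) (hp ▸ Submodule.mem_top)
    h (by simp) (fun x y hx hy => by simp [hx, hy])

section GradedAction

variable {F T A : Type*} [CommRing F] [DecidableEq T] [AddCommGroup A] [Module F A]
  {𝒜 : T → Submodule F A} {ρ : (T → F) →ₐ[F] Module.End F A}

theorem rho_single_mem (htop : iSup 𝒜 = ⊤)
    (hρ : ∀ (h : T → F) (t : T), ∀ a ∈ 𝒜 t, ρ h a = h t • a) (t : T) (a : A) :
    ρ (Pi.single t 1) a ∈ 𝒜 t := by
  refine Submodule.iSup_induction 𝒜 (motive := fun a => ρ (Pi.single t 1) a ∈ 𝒜 t)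
    (htop ▸ Submodule.mem_top) (fun s x hx => ?_) (by simp) (fun x y hx hy => by
      simpa using add_mem hx hy)
  rw [hρ _ s x hx]
  rcases eq_or_ne s t with rfl | hst
  · simpa using hx
  · simp [hst]

theorem rho_single_apply_sum (hρ : ∀ (h : T → F) (t : T), ∀ a ∈ 𝒜 t, ρ h a = h t • a)
    {S : Finset T} (hS : ∀ t ∉ S, 𝒜 t = ⊥) (b : T → A) (hb : ∀ t, b t ∈ 𝒜 t) (t : T) :
    ρ (Pi.single t 1) (∑ s ∈ S, b s) = b t := by
  rw [map_sum, Finset.sum_congr rfl fun s _ => hρ _ s _ (hb s)]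
  simp only [Pi.single_apply, ite_smul, one_smul, zero_smul, Finset.sum_ite_eq']
  split_ifs with ht
  · rfl
  · have hbt := hb t
    rw [hS t ht, Submodule.mem_bot] at hbt
    exact hbt.symm

theorem rho_eq_sum_smul_rho_single (htop : iSup 𝒜 = ⊤)
    (hρ : ∀ (h : T → F) (t : T), ∀ a ∈ 𝒜 t, ρ h a = h t • a)
    {S : Finset T} (hS : ∀ t ∉ S, 𝒜 t = ⊥) (h : T → F) :
    ρ h = ∑ t ∈ S, h t • ρ (Pi.single t 1) := by
  refine LinearMap.ext_of_iSup_eq_top htop fun s a ha => ?_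
  rw [LinearMap.sum_apply, hρ _ s a ha,
    Finset.sum_congr rfl fun t _ => by rw [LinearMap.smul_apply, hρ _ s a ha]]
  simp only [Pi.single_apply, ite_smul, one_smul, zero_smul, smul_ite, smul_zero, Finset.sum_ite_eq]
  split_ifs with hs
  · rfl
  · rw [hS s hs, Submodule.mem_bot] at ha
    rw [ha, smul_zero]

end GradedAction

section FreeAlgebras

open TensorAlgebra

variable {F : Type*} [Field F] {T : Type*}
  {A : Type*} [NonUnitalRing A] [Module F A] [SMulCommClass F A A] [IsScalarTower F A A]

@[simp]
theorem evalH_ι {H : Type*} [Ring H] [Algebra F H] (ρ : H →ₐ[F] Module.End F A) (ψ : ℕ → A)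
    (i : ℕ) (h : H) :
    evalH F A H ρ ψ (ι F (Finsupp.single i h)) = Unitization.inr (ρ h (ψ i)) := by
  simp [evalH]

@[simp]
theorem evalGr_ι (ψ : ℕ × T → A) (p : ℕ × T) (c : F) :
    evalGr F T A ψ (ι F (Finsupp.single p c)) = Unitization.inr (c • ψ p) := by
  simp [evalGr]

theorem mem_IdHSub_iff {H : Type*} [Ring H] [Algebra F H] {ρ : H →ₐ[F] Module.End F A}
    {f : FreeHPolyAlg F H} : f ∈ IdHSub F A H ρ ↔ ∀ ψ : ℕ → A, evalH F A H ρ ψ f = 0 := by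
  simp [IdHSub]

theorem mem_IdGr_iff {𝒜 : T → Submodule F A} {f : FreeGrAlg F T} :
    f ∈ IdGr F T A 𝒜 ↔ ∀ ψ : ℕ × T → A, (∀ i t, ψ (i, t) ∈ 𝒜 t) → evalGr F T A ψ f = 0 := by
  simp [IdGr]

variable (F) in
/-- The substitution `x_i^h ↦ ∑_{t ∈ S} h(t) x_i^t`. -/
def hToGr (S : Finset T) : FreeHPolyAlg F (T → F) →ₐ[F] FreeGrAlg F T :=
  lift F (Finsupp.lsum F fun i => ∑ t ∈ S,
    (LinearMap.proj t : (T → F) →ₗ[F] F).smulRight (ι F (Finsupp.single (i, t) 1)))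

@[simp]
theorem hToGr_ι (S : Finset T) (i : ℕ) (h : T → F) :
    hToGr F S (ι F (Finsupp.single i h)) = ∑ t ∈ S, h t • ι F (Finsupp.single (i, t) 1) := by
  simp [hToGr]

theorem hToGr_mem_PnGr (S : Finset T) {n : ℕ} {f : FreeHPolyAlg F (T → F)}
    (hf : f ∈ PnH F (T → F) n) : hToGr F S f ∈ PnGr F T n := by
  suffices PnH F (T → F) n ≤ (PnGr F T n).comap (hToGr F S).toLinearMap from this hf
  refine Submodule.span_le.2 ?_
  rintro _ ⟨σ, h, rfl⟩
  rw [SetLike.mem_coe, Submodule.mem_comap, AlgHom.toLinearMap_apply, map_list_prod,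
    List.map_ofFn]
  simp only [Function.comp_def, hToGr_ι]
  rw [← MultilinearMap.mkPiAlgebraFin_apply (R := F), MultilinearMap.map_sum_finset]
  refine Submodule.sum_mem _ fun r _ => ?_
  rw [MultilinearMap.map_smul_univ, MultilinearMap.mkPiAlgebraFin_apply]
  exact Submodule.smul_mem _ _ (Submodule.subset_span ⟨σ, r, rfl⟩)

variable [DecidableEq T]

variable (F T) in
/-- The substitution `x_i^t ↦ x_i^{e_t}`, where `e_t = Pi.single t 1` is the indicator of `t`. -/
def grToH : FreeGrAlg F T →ₐ[F] FreeHPolyAlg F (T → F) :=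
  lift F ((ι F).comp (Finsupp.lsum F fun p => (Finsupp.lsingle p.1).comp
    (LinearMap.toSpanSingleton F (T → F) (Pi.single p.2 1))))

@[simp]
theorem grToH_ι (p : ℕ × T) (c : F) :
    grToH F T (ι F (Finsupp.single p c)) = ι F (Finsupp.single p.1 (c • Pi.single p.2 1)) := by
  simp [grToH]

theorem evalH_comp_grToH (ρ : (T → F) →ₐ[F] Module.End F A) (ψ : ℕ → A) :
    (evalH F A (T → F) ρ ψ).comp (grToH F T) =
      evalGr F T A (fun p => ρ (Pi.single p.2 1) (ψ p.1)) := by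
  refine hom_ext (Finsupp.lhom_ext fun p c => ?_)
  simp

theorem grToH_mem_PnH {n : ℕ} {f : FreeGrAlg F T} (hf : f ∈ PnGr F T n) :
    grToH F T f ∈ PnH F (T → F) n := by
  suffices PnGr F T n ≤ (PnH F (T → F) n).comap (grToH F T).toLinearMap from this hf
  refine Submodule.span_le.2 ?_
  rintro _ ⟨σ, t, rfl⟩
  refine Submodule.subset_span ⟨σ, fun j => Pi.single (t j) 1, ?_⟩
  simp [map_list_prod, List.map_ofFn, Function.comp_def]

end FreeAlgebras

section GradedIdentities

variable {F : Type*} [Field F] {T : Type*} [DecidableEq T]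
  {A : Type*} [NonUnitalRing A] [Module F A] [SMulCommClass F A A] [IsScalarTower F A A]
  {𝒜 : T → Submodule F A} {ρ : (T → F) →ₐ[F] Module.End F A}

theorem grToH_mem_IdHSub_iff (htop : iSup 𝒜 = ⊤)
    (hρ : ∀ (h : T → F) (t : T), ∀ a ∈ 𝒜 t, ρ h a = h t • a)
    {S : Finset T} (hS : ∀ t ∉ S, 𝒜 t = ⊥) (f : FreeGrAlg F T) :
    grToH F T f ∈ IdHSub F A (T → F) ρ ↔ f ∈ IdGr F T A 𝒜 := by
  simp only [mem_IdHSub_iff, mem_IdGr_iff, ← AlgHom.comp_apply, evalH_comp_grToH]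
  constructor
  · intro hf ψ hψ
    have hψ_eq : (fun p => ρ (Pi.single p.2 1) (∑ t ∈ S, ψ (p.1, t))) = ψ :=
      funext fun p => rho_single_apply_sum hρ hS (fun t => ψ (p.1, t)) (hψ p.1) p.2
    simpa only [hψ_eq] using hf fun i => ∑ t ∈ S, ψ (i, t)
  · exact fun hf ψ => hf _ fun i t => rho_single_mem htop hρ t (ψ i)

theorem sub_grToH_hToGr_mem_IdHSub (htop : iSup 𝒜 = ⊤)
    (hρ : ∀ (h : T → F) (t : T), ∀ a ∈ 𝒜 t, ρ h a = h t • a)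
    {S : Finset T} (hS : ∀ t ∉ S, 𝒜 t = ⊥) (f : FreeHPolyAlg F (T → F)) :
    f - grToH F T (hToGr F S f) ∈ IdHSub F A (T → F) ρ := by
  rw [mem_IdHSub_iff]
  intro ψ
  have hcomp : ((evalH F A (T → F) ρ ψ).comp (grToH F T)).comp (hToGr F S) =
      evalH F A (T → F) ρ ψ := by
    refine TensorAlgebra.hom_ext (Finsupp.lhom_ext fun i h => ?_)
    simp only [LinearMap.comp_apply, AlgHom.toLinearMap_apply, AlgHom.comp_apply, hToGr_ι,
      map_sum, map_smul, grToH_ι, one_smul, evalH_ι, rho_eq_sum_smul_rho_single htop hρ hS h,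
      LinearMap.sum_apply, LinearMap.smul_apply]
    simp_rw [← Unitization.inr_smul]
    exact (map_sum (Unitization.inrHom F F A) _ S).symm
  rw [map_sub, ← AlgHom.comp_apply, ← AlgHom.comp_apply, hcomp, sub_self]

end GradedIdentities

theorem graded_codim_eq_dual_codim_general (F : Type*) [Field F]
    (T : Type*) [DecidableEq T]
    (A : Type*) [NonUnitalRing A] [Module F A] [SMulCommClass F A A] [IsScalarTower F A A]
    [FiniteDimensional F A]
    (𝒜 : T → Submodule F A)
    (hint : DirectSum.IsInternal 𝒜)
    (ρ : (T → F) →ₐ[F] Module.End F A)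
    (hρ : ∀ (h : T → F) (t : T), ∀ a ∈ 𝒜 t, ρ h a = h t • a) :
    ∀ n : ℕ,
      Module.rank F
        (↥(PnGr F T n) ⧸ Submodule.comap (PnGr F T n).subtype (IdGr F T A 𝒜)) =
      Module.rank F
        (↥(PnH F (T → F) n) ⧸
          Submodule.comap (PnH F (T → F) n).subtype (IdHSub F A (T → F) ρ)) := by
  intro n
  have htop : iSup 𝒜 = ⊤ := hint.submodule_iSup_eq_top
  obtain ⟨S, hS⟩ : ∃ S : Finset T, ∀ t ∉ S, 𝒜 t = ⊥ :=
    ⟨(Submodule.finite_ne_bot_of_iSupIndep hint.submodule_iSupIndep).toFinset,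
      fun t ht => by simpa using ht⟩
  exact (Submodule.quotientComapSubtypeEquiv (grToH F T).toLinearMap
    (fun _ => grToH_mem_PnH) (fun f _ => grToH_mem_IdHSub_iff htop hρ hS f)
    (fun f hf => ⟨hToGr F S f, hToGr_mem_PnGr S hf,
      sub_grToH_hToGr_mem_IdHSub htop hρ hS f⟩)).rank_eq

/-- Let `A` be a finite-dimensional `T`-graded algebra over a field `F`, where `T` is a
semigroup, and endow `A` with the natural generalized `(FT)*`-action `h·a^{(t)} =
h(t)·a^{(t)}` (here `(FT)* = T → F` with pointwise product).  Then for all `n`, the `n`-th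
codimension of graded polynomial identities equals the `n`-th codimension of
`(FT)*`-identities: `c_n^{T-gr}(A) = c_n^{(FT)*}(A)`. -/
theorem graded_codim_eq_dual_codim (F : Type*) [Field F]
    (T : Type*) [Semigroup T] [DecidableEq T]
    (A : Type*) [NonUnitalRing A] [Module F A] [SMulCommClass F A A] [IsScalarTower F A A]
    [FiniteDimensional F A]
    (𝒜 : T → Submodule F A)
    (hgrmul : ∀ g t : T, ∀ a ∈ 𝒜 g, ∀ b ∈ 𝒜 t, a * b ∈ 𝒜 (g * t))
    (hint : DirectSum.IsInternal 𝒜)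
    (ρ : (T → F) →ₐ[F] Module.End F A)
    (hρ : ∀ (h : T → F) (t : T), ∀ a ∈ 𝒜 t, ρ h a = h t • a) :
    ∀ n : ℕ,
      Module.rank F
        (↥(PnGr F T n) ⧸ Submodule.comap (PnGr F T n).subtype (IdGr F T A 𝒜)) =
      Module.rank F
        (↥(PnH F (T → F) n) ⧸
          Submodule.comap (PnH F (T → F) n).subtype (IdHSub F A (T → F) ρ)) :=
  graded_codim_eq_dual_codim_general F T A 𝒜 hint ρ hρ
end
end
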